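/- arXiv:2112.06872 — 2 statements merged into one kernel-verified Lean document; each statement's English description precedes it below -/
import Mathlib

section
/- Rényi moment of the Gaussian mechanism: Let σ² > 0, let μ, μ' ∈ ℝ, and let α ∈ ℝ with α > 1. Then ∫ x, (gaussianPDFReal μ σ² x)^α * (gaussianPDFReal μ' σ² x)^(1 - α) dx = Real.exp (α * (α - 1) * (μ - μ')² / (2 * σ²)), where the integral is over ℝ with Lebesgue measure. Consequently the Rényi divergence of order α between N(μ, σ²) and N(μ', σ²), namely (α - 1)⁻¹ times the logarithm of this integral, equals α (μ - μ')² / (2σ²), which is the (α, C²α/(2σ²))-RDP guarantee of the Gaussian mechanism when |μ - μ'| ≤ C. -/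
open scoped NNReal
open ProbabilityTheory

/-- Rényi moment of the Gaussian mechanism: the integral
`∫ p^α q^(1-α)` for two Gaussian densities with common variance `σ² = v`,
and the resulting Rényi divergence of order `α`. -/
theorem gaussian_renyi_moment
    (v : ℝ≥0) (hv : 0 < v) (μ μ' : ℝ) (α : ℝ) (hα : 1 < α) :
    (∫ x : ℝ, (gaussianPDFReal μ v x) ^ α * (gaussianPDFReal μ' v x) ^ (1 - α))
      = Real.exp (α * (α - 1) * (μ - μ') ^ 2 / (2 * (v : ℝ))) ∧
    (α - 1)⁻¹ *
      Real.log (∫ x : ℝ,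
        (gaussianPDFReal μ v x) ^ α * (gaussianPDFReal μ' v x) ^ (1 - α))
      = α * (μ - μ') ^ 2 / (2 * (v : ℝ)) := by
  have hv0 : (v : ℝ) ≠ 0 := by exact_mod_cast hv.ne'
  have hvpos : (0 : ℝ) < v := by exact_mod_cast hv
  have hs : (0 : ℝ) < (Real.sqrt (2 * Real.pi * v))⁻¹ := by positivity
  set m : ℝ := α * μ + (1 - α) * μ' with hm
  set C : ℝ := α * (α - 1) * (μ - μ') ^ 2 / (2 * (v : ℝ)) with hC
  have key : ∀ x : ℝ, (gaussianPDFReal μ v x) ^ α * (gaussianPDFReal μ' v x) ^ (1 - α)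
      = Real.exp C * gaussianPDFReal m v x := by
    intro x
    have hp := gaussianPDFReal_pos μ v x hv.ne'
    have hq := gaussianPDFReal_pos μ' v x hv.ne'
    rw [Real.rpow_def_of_pos hp, Real.rpow_def_of_pos hq, ← Real.exp_add]
    simp only [gaussianPDFReal]
    rw [Real.log_mul hs.ne' (Real.exp_ne_zero _), Real.log_exp,
      Real.log_mul hs.ne' (Real.exp_ne_zero _), Real.log_exp]
    rw [show Real.exp C * ((Real.sqrt (2 * Real.pi * v))⁻¹ * Real.exp (-(x - m) ^ 2 / (2 * v)))
        = Real.exp (C + (Real.log (Real.sqrt (2 * Real.pi * v))⁻¹ + -(x - m) ^ 2 / (2 * v))) by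
      rw [Real.exp_add, Real.exp_add, Real.exp_log hs]]
    congr 1
    rw [hC, hm]
    field_simp
    ring
  have hint : (∫ x : ℝ, (gaussianPDFReal μ v x) ^ α * (gaussianPDFReal μ' v x) ^ (1 - α))
      = Real.exp C := by
    simp_rw [key]
    rw [MeasureTheory.integral_const_mul, integral_gaussianPDFReal_eq_one m hv.ne', mul_one]
  refine ⟨hint, ?_⟩
  rw [hint, Real.log_exp, hC]
  have hα1 : α - 1 ≠ 0 := sub_ne_zero.mpr hα.ne'
  field_simp
end

section
/- Corruption of a single share at the exact reconstruction threshold changes the reconstructed secret: Let F be a field and let A ⊆ F be a finite set with A.card = t whose elements are all nonzero (the evaluation points of exactly t shares). Let y, y' : F → F be two share assignments that agree on A except at a single point j ∈ A where y j ≠ y' j. Then the reconstructed secrets differ: (Lagrange.interpolate A id y).eval 0 ≠ (Lagrange.interpolate A id y').eval 0. In particular, when all t available shares are needed to reach the reconstruction threshold, corrupting any one share necessarily changes the reconstructed result. -/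
open Polynomial

/-- At the exact reconstruction threshold, corrupting a single share changes
the reconstructed secret. -/
theorem shamir_single_share_corruption_changes_secret
    (F : Type*) [Field F] [DecidableEq F]
    (t : ℕ) (A : Finset F) (hA : A.card = t)
    (h0 : ∀ x ∈ A, x ≠ 0)
    (y y' : F → F) (j : F) (hj : j ∈ A)
    (hagree : ∀ x ∈ A, x ≠ j → y x = y' x)
    (hdiff : y j ≠ y' j) :
    (Lagrange.interpolate A id y).eval 0 ≠ (Lagrange.interpolate A id y').eval 0 := by
  intro h
  have hsub : Lagrange.interpolate A id y - Lagrange.interpolate A id y'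
      = C (y j - y' j) * Lagrange.basis A id j := by
    rw [Lagrange.interpolate_apply, Lagrange.interpolate_apply, ← Finset.sum_sub_distrib]
    rw [Finset.sum_eq_single j]
    · rw [← sub_mul, ← C_sub]
    · intro b hb hbj
      rw [hagree b hb hbj, sub_self]
    · intro h'; exact absurd hj h'
  have heval : (C (y j - y' j) * Lagrange.basis A id j).eval 0 = 0 := by
    rw [← hsub, eval_sub, h, sub_self]
  rw [eval_mul, eval_C, mul_eq_zero] at heval
  rcases heval with h1 | h2
  · exact hdiff (sub_eq_zero.mp h1)
  · -- basis eval at 0 is nonzero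
    rw [Lagrange.basis, eval_prod, Finset.prod_eq_zero_iff] at h2
    obtain ⟨k, hk, hk0⟩ := h2
    have hkA := Finset.mem_of_mem_erase hk
    have hkj : k ≠ j := Finset.ne_of_mem_erase hk
    rw [Lagrange.basisDivisor, eval_mul, eval_C, eval_sub, eval_X, eval_C, zero_sub,
      mul_eq_zero] at hk0
    rcases hk0 with h3 | h4
    · exact (sub_ne_zero.mpr (by simpa using hkj.symm)) (inv_eq_zero.mp h3)
    · exact h0 k hkA (neg_eq_zero.mp h4)
end
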